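/- arXiv:2502.18382 — 5 statements merged into one kernel-verified Lean document; each statement's English description precedes it below -/
import Mathlib

section
/- Let u and v be two distinct vertices and let A be a 5-element set of vertices disjoint from {u,v}. In the equality gadget on (u,v,A): (i) every proper 3-coloring c of the gadget satisfies c(u) = c(v); and (ii) for every color x ∈ {1,2,3} there exists a proper 3-coloring c of the gadget with c(u) = c(v) = x. -/
/-- The equality gadget on `(u, v, A)`: the 3-uniform hypergraph on vertex set
`{u, v} ∪ A` whose hyperedges are exactly the 3-element subsets of `{u, v} ∪ A`
that do not contain both `u` and `v`. -/
def equalityGadget {V : Type*} [DecidableEq V] (u v : V) (A : Finset V) :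
    Finset (Finset V) :=
  ((insert u (insert v A)).powersetCard 3).filter fun e => ¬(u ∈ e ∧ v ∈ e)

/-- `c` is a proper 3-coloring of the 3-uniform hypergraph with hyperedge set `E`:
no hyperedge is monochromatic. -/
def IsProperColoring3 {V : Type*} (E : Finset (Finset V)) (c : V → Fin 3) : Prop :=
  ∀ e ∈ E, ∃ x ∈ e, ∃ y ∈ e, c x ≠ c y

lemma mem_equalityGadget {V : Type*} [DecidableEq V] {u v : V} {A : Finset V}
    {e : Finset V} :
    e ∈ equalityGadget u v A ↔
      e ⊆ insert u (insert v A) ∧ e.card = 3 ∧ ¬(u ∈ e ∧ v ∈ e) := by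
  simp [equalityGadget, Finset.mem_powersetCard, and_assoc]

lemma fin3_resolve : ∀ i j x y : Fin 3, i ≠ j → x ≠ i → x ≠ j → y ≠ i → y ≠ j → x = y := by
  decide

lemma fin3_cover : ∀ x k : Fin 3, k = x ∨ k = x + 1 ∨ k = x + 2 := by decide

theorem equalityGadget_spec {V : Type*} [DecidableEq V] (u v : V) (A : Finset V)
    (huv : u ≠ v) (hA : A.card = 5) (huA : u ∉ A) (hvA : v ∉ A) :
    (∀ c : V → Fin 3, IsProperColoring3 (equalityGadget u v A) c → c u = c v) ∧
    (∀ x : Fin 3, ∃ c : V → Fin 3,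
      IsProperColoring3 (equalityGadget u v A) c ∧ c u = x ∧ c v = x) := by
  constructor
  · -- part (i)
    intro c hc
    -- monochromatic pairs in A force u (and v) off that color
    have key : ∀ w : V, w = u ∨ w = v → ∀ a b, a ∈ A → b ∈ A → a ≠ b →
        c a = c b → c w ≠ c a := by
      intro w hw a b ha hb hab hcab hwc
      have he : ({w, a, b} : Finset V) ∈ equalityGadget u v A := by
        rw [mem_equalityGadget]
        refine ⟨?_, ?_, ?_⟩
        · intro p hp
          simp only [Finset.mem_insert, Finset.mem_singleton] at hp
          rcases hp with rfl | rfl | rfl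
          · rcases hw with rfl | rfl <;> simp
          · simp [ha]
          · simp [hb]
        · rw [Finset.card_insert_of_notMem, Finset.card_pair hab]
          simp only [Finset.mem_insert, Finset.mem_singleton]
          rintro (rfl | rfl)
          · rcases hw with rfl | rfl
            · exact huA ha
            · exact hvA ha
          · rcases hw with rfl | rfl
            · exact huA hb
            · exact hvA hb
        · rintro ⟨hu', hv'⟩
          simp only [Finset.mem_insert, Finset.mem_singleton] at hu' hv'
          rcases hw with rfl | rfl
          · rcases hv' with rfl | rfl | rfl
            · exact huv rfl
            · exact hvA ha
            · exact hvA hb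
          · rcases hu' with rfl | rfl | rfl
            · exact huv rfl
            · exact huA ha
            · exact huA hb
      obtain ⟨p, hp, q, hq, hpq⟩ := hc _ he
      have hall : ∀ z ∈ ({w, a, b} : Finset V), c z = c a := by
        intro z hz
        simp only [Finset.mem_insert, Finset.mem_singleton] at hz
        rcases hz with rfl | rfl | rfl
        · exact hwc
        · rfl
        · exact hcab.symm
      exact hpq ((hall p hp).trans (hall q hq).symm)
    -- no three elements of A share a color
    have hle : ∀ i : Fin 3, (A.filter fun a => c a = i).card ≤ 2 := by
      intro i
      by_contra hgt
      push_neg at hgt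
      obtain ⟨t, hts, htc⟩ := Finset.exists_subset_card_eq hgt
      rw [Finset.card_eq_three] at htc
      obtain ⟨a, b, d, hab, had, hbd, rfl⟩ := htc
      have ha := hts (by simp : a ∈ ({a,b,d} : Finset V))
      have hb := hts (by simp : b ∈ ({a,b,d} : Finset V))
      have hd := hts (by simp : d ∈ ({a,b,d} : Finset V))
      simp only [Finset.mem_filter] at ha hb hd
      have he : ({a, b, d} : Finset V) ∈ equalityGadget u v A := by
        rw [mem_equalityGadget]
        refine ⟨?_, ?_, ?_⟩
        · intro p hp
          simp only [Finset.mem_insert, Finset.mem_singleton] at hp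
          rcases hp with rfl | rfl | rfl <;> simp [ha.1, hb.1, hd.1]
        · rw [Finset.card_insert_of_notMem, Finset.card_insert_of_notMem,
            Finset.card_singleton] <;> simp_all
        · rintro ⟨hu', _⟩
          simp only [Finset.mem_insert, Finset.mem_singleton] at hu'
          rcases hu' with rfl | rfl | rfl
          · exact huA ha.1
          · exact huA hb.1
          · exact huA hd.1
      obtain ⟨p, hp, q, hq, hpq⟩ := hc _ he
      have hall : ∀ z ∈ ({a, b, d} : Finset V), c z = i := by
        intro z hz
        simp only [Finset.mem_insert, Finset.mem_singleton] at hz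
        rcases hz with rfl | rfl | rfl
        · exact ha.2
        · exact hb.2
        · exact hd.2
      exact hpq ((hall p hp).trans (hall q hq).symm)
    have hsum : (A.filter fun a => c a = (0:Fin 3)).card
        + (A.filter fun a => c a = (1:Fin 3)).card
        + (A.filter fun a => c a = (2:Fin 3)).card = 5 := by
      have := Finset.card_eq_sum_card_fiberwise
        (f := c) (s := A) (t := Finset.univ) (fun a _ => Finset.mem_univ _)
      rw [hA, Fin.sum_univ_three] at this
      omega
    have htwo : ∀ i : Fin 3, (A.filter fun a => c a = i).card = 2 →
        c u ≠ i ∧ c v ≠ i := by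
      intro i hi
      rw [Finset.card_eq_two] at hi
      obtain ⟨a, b, hab, hset⟩ := hi
      have ha : a ∈ A.filter fun a => c a = i := hset ▸ (by simp)
      have hb : b ∈ A.filter fun a => c a = i := hset ▸ (by simp)
      simp only [Finset.mem_filter] at ha hb
      have hcab : c a = c b := ha.2.trans hb.2.symm
      constructor
      · exact fun h => key u (Or.inl rfl) a b ha.1 hb.1 hab hcab (h.trans ha.2.symm)
      · exact fun h => key v (Or.inr rfl) a b ha.1 hb.1 hab hcab (h.trans ha.2.symm)
    have h0 := hle 0; have h1 := hle 1; have h2 := hle 2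
    have hcases : ((A.filter fun a => c a = (0:Fin 3)).card = 2
          ∧ (A.filter fun a => c a = (1:Fin 3)).card = 2)
        ∨ ((A.filter fun a => c a = (0:Fin 3)).card = 2
          ∧ (A.filter fun a => c a = (2:Fin 3)).card = 2)
        ∨ ((A.filter fun a => c a = (1:Fin 3)).card = 2
          ∧ (A.filter fun a => c a = (2:Fin 3)).card = 2) := by omega
    rcases hcases with ⟨ha, hb⟩ | ⟨ha, hb⟩ | ⟨ha, hb⟩
    · obtain ⟨hu1, hv1⟩ := htwo 0 ha
      obtain ⟨hu2, hv2⟩ := htwo 1 hb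
      exact fin3_resolve 0 1 (c u) (c v) (by decide) hu1 hu2 hv1 hv2
    · obtain ⟨hu1, hv1⟩ := htwo 0 ha
      obtain ⟨hu2, hv2⟩ := htwo 2 hb
      exact fin3_resolve 0 2 (c u) (c v) (by decide) hu1 hu2 hv1 hv2
    · obtain ⟨hu1, hv1⟩ := htwo 1 ha
      obtain ⟨hu2, hv2⟩ := htwo 2 hb
      exact fin3_resolve 1 2 (c u) (c v) (by decide) hu1 hu2 hv1 hv2
  · -- part (ii)
    intro x
    -- extract 5 distinct elements of A
    obtain ⟨a0, t0, ha0, rfl, ht0⟩ := Finset.card_eq_succ.mp hA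
    obtain ⟨a1, t1, ha1, rfl, ht1⟩ := Finset.card_eq_succ.mp ht0
    obtain ⟨a2, t2, ha2, rfl, ht2⟩ := Finset.card_eq_succ.mp ht1
    obtain ⟨a3, t3, ha3, rfl, ht3⟩ := Finset.card_eq_succ.mp ht2
    rw [Finset.card_eq_one] at ht3
    obtain ⟨a4, rfl⟩ := ht3
    simp only [Finset.mem_insert, Finset.mem_singleton, not_or] at huA hvA ha0 ha1 ha2 ha3
    set c : V → Fin 3 := fun w =>
      if w = u ∨ w = v ∨ w = a0 then x
      else if w = a1 ∨ w = a2 then x + 1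
      else x + 2 with hcdef
    have hcu : c u = x := by simp [hcdef]
    have hcv : c v = x := by simp [hcdef]
    have hca0 : c a0 = x := by simp [hcdef]
    have hca1 : c a1 = x + 1 := by
      have h1 : ¬(a1 = u ∨ a1 = v ∨ a1 = a0) := by
        push_neg
        exact ⟨fun h => huA.2.1 h.symm, fun h => hvA.2.1 h.symm, fun h => ha0.1 h.symm⟩
      simp only [hcdef, if_neg h1]; simp
    have hca2 : c a2 = x + 1 := by
      have h1 : ¬(a2 = u ∨ a2 = v ∨ a2 = a0) := by
        push_neg
        exact ⟨fun h => huA.2.2.1 h.symm, fun h => hvA.2.2.1 h.symm, fun h => ha0.2.1 h.symm⟩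
      simp only [hcdef, if_neg h1]; simp
    have hca3 : c a3 = x + 2 := by
      have h1 : ¬(a3 = u ∨ a3 = v ∨ a3 = a0) := by
        push_neg
        exact ⟨fun h => huA.2.2.2.1 h.symm, fun h => hvA.2.2.2.1 h.symm, fun h => ha0.2.2.1 h.symm⟩
      have h2 : ¬(a3 = a1 ∨ a3 = a2) := by
        push_neg
        exact ⟨fun h => ha1.2.1 h.symm, fun h => ha2.1 h.symm⟩
      simp only [hcdef, if_neg h1, if_neg h2]
    have hca4 : c a4 = x + 2 := by
      have h1 : ¬(a4 = u ∨ a4 = v ∨ a4 = a0) := by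
        push_neg
        exact ⟨fun h => huA.2.2.2.2 h.symm, fun h => hvA.2.2.2.2 h.symm, fun h => ha0.2.2.2 h.symm⟩
      have h2 : ¬(a4 = a1 ∨ a4 = a2) := by
        push_neg
        exact ⟨fun h => ha1.2.2 h.symm, fun h => ha2.2 h.symm⟩
      simp only [hcdef, if_neg h1, if_neg h2]
    refine ⟨c, ?_, hcu, hcv⟩
    intro e he
    rw [mem_equalityGadget] at he
    obtain ⟨hsub, hcard, hne⟩ := he
    by_contra h
    push_neg at h
    obtain ⟨w, hw⟩ := Finset.card_pos.mp (by omega : 0 < e.card)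
    have hk : ∀ p ∈ e, c p = c w := fun p hp => h p hp w hw
    have hx1 : x + 1 ≠ x := by
      have : ∀ y : Fin 3, y + 1 ≠ y := by decide
      exact this x
    have hx2 : x + 2 ≠ x := by
      have : ∀ y : Fin 3, y + 2 ≠ y := by decide
      exact this x
    have hx12 : x + 1 ≠ x + 2 := by
      have : ∀ y : Fin 3, y + 1 ≠ y + 2 := by decide
      exact this x
    rcases fin3_cover x (c w) with hcw | hcw | hcw
    · -- everything in e is colored x, so e = {u, v, a0}
      have hsub' : e ⊆ ({u, v, a0} : Finset V) := by
        intro p hp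
        have hpc : c p = x := (hk p hp).trans hcw
        have := hsub hp
        simp only [Finset.mem_insert, Finset.mem_singleton] at this ⊢
        rcases this with rfl | rfl | rfl | rfl | rfl | rfl | rfl
        · exact Or.inl rfl
        · exact Or.inr (Or.inl rfl)
        · exact Or.inr (Or.inr rfl)
        · rw [hca1] at hpc; exact absurd hpc hx1
        · rw [hca2] at hpc; exact absurd hpc hx1
        · rw [hca3] at hpc; exact absurd hpc hx2
        · rw [hca4] at hpc; exact absurd hpc hx2
      have hc3 : ({u, v, a0} : Finset V).card ≤ 3 := by
        apply le_trans (Finset.card_insert_le _ _)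
        have := Finset.card_insert_le v ({a0} : Finset V)
        simp at this ⊢
        omega
      have heq : e = ({u, v, a0} : Finset V) :=
        Finset.eq_of_subset_of_card_le hsub' (by omega)
      exact hne ⟨heq ▸ (by simp), heq ▸ (by simp)⟩
    · have hsub' : e ⊆ ({a1, a2} : Finset V) := by
        intro p hp
        have hpc : c p = x + 1 := (hk p hp).trans hcw
        have := hsub hp
        simp only [Finset.mem_insert, Finset.mem_singleton] at this ⊢
        rcases this with rfl | rfl | rfl | rfl | rfl | rfl | rfl
        · rw [hcu] at hpc; exact absurd hpc.symm hx1
        · rw [hcv] at hpc; exact absurd hpc.symm hx1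
        · rw [hca0] at hpc; exact absurd hpc.symm hx1
        · exact Or.inl rfl
        · exact Or.inr rfl
        · rw [hca3] at hpc; exact absurd hpc.symm hx12
        · rw [hca4] at hpc; exact absurd hpc.symm hx12
      have := Finset.card_le_card hsub'
      have h2 : ({a1, a2} : Finset V).card ≤ 2 := Finset.card_insert_le _ _ |>.trans (by simp)
      omega
    · have hsub' : e ⊆ ({a3, a4} : Finset V) := by
        intro p hp
        have hpc : c p = x + 2 := (hk p hp).trans hcw
        have := hsub hp
        simp only [Finset.mem_insert, Finset.mem_singleton] at this ⊢
        rcases this with rfl | rfl | rfl | rfl | rfl | rfl | rfl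
        · rw [hcu] at hpc; exact absurd hpc.symm hx2
        · rw [hcv] at hpc; exact absurd hpc.symm hx2
        · rw [hca0] at hpc; exact absurd hpc.symm hx2
        · rw [hca1] at hpc; exact absurd hpc hx12
        · rw [hca2] at hpc; exact absurd hpc hx12
        · exact Or.inl rfl
        · exact Or.inr rfl
      have := Finset.card_le_card hsub'
      have h2 : ({a3, a4} : Finset V).card ≤ 2 := Finset.card_insert_le _ _ |>.trans (by simp)
      omega
end

section
/- Let u, v, u', v' be four distinct vertices and let A₁, A₂ be disjoint 5-element sets of vertices disjoint from {u,v,u',v'}. Consider the inequality gadget: the 3-uniform hypergraph on {u,v,u',v'} ∪ A₁ ∪ A₂ whose hyperedges are those of the equality gadget on (u,u',A₁), those of the equality gadget on (v,v',A₂), together with the hyperedges {u,u',v} and {u,v,v'}. Then: (i) every proper 3-coloring c of this hypergraph satisfies c(u) ≠ c(v); and (ii) for all distinct colors x, y ∈ {1,2,3} there exists a proper 3-coloring c with c(u) = x and c(v) = y. -/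
/-- The inequality gadget on `(u, v, u', v', A₁, A₂)`: the hyperedges of the
equality gadgets on `(u, u', A₁)` and `(v, v', A₂)` together with the
hyperedges `{u, u', v}` and `{u, v, v'}`. -/
def inequalityGadget {V : Type*} [DecidableEq V] (u v u' v' : V) (A₁ A₂ : Finset V) :
    Finset (Finset V) :=
  equalityGadget u u' A₁ ∪ equalityGadget v v' A₂ ∪
    {({u, u', v} : Finset V), ({u, v, v'} : Finset V)}

lemma fin3_cases (k : Fin 3) : k = 0 ∨ k = 1 ∨ k = 2 := by
  revert k; decide

lemma eqGadget_forces {V : Type*} [DecidableEq V] {u v : V} {A : Finset V} {c : V → Fin 3}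
    (huv : u ≠ v) (huA : u ∉ A) (hvA : v ∉ A) (hA : A.card = 5)
    (hc : IsProperColoring3 (equalityGadget u v A) c) : c u = c v := by
  by_contra hne
  have h2 : ∀ k : Fin 3, (A.filter (fun w => c w = k)).card ≤ 2 := by
    intro k
    by_contra h
    push_neg at h
    obtain ⟨s, hsub, hcard⟩ := Finset.exists_subset_card_eq h
    have hsA : s ⊆ A := hsub.trans (Finset.filter_subset _ _)
    have hs : s ∈ equalityGadget u v A := by
      simp only [equalityGadget, Finset.mem_filter, Finset.mem_powersetCard]
      refine ⟨⟨fun w hw => ?_, hcard⟩, fun ⟨hu, _⟩ => huA (hsA hu)⟩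
      exact Finset.mem_insert_of_mem (Finset.mem_insert_of_mem (hsA hw))
    obtain ⟨a, ha, b, hb, hab⟩ := hc s hs
    have hak := (Finset.mem_filter.mp (hsub ha)).2
    have hbk := (Finset.mem_filter.mp (hsub hb)).2
    exact hab (hak.trans hbk.symm)
  have key : ∀ p : V, p = u ∨ p = v → (A.filter (fun w => c w = c p)).card ≤ 1 := by
    intro p hp
    by_contra h
    push_neg at h
    obtain ⟨a, b, ha, hb, hab⟩ := Finset.one_lt_card_iff.mp h
    have haA := (Finset.mem_filter.mp ha).1
    have hbA := (Finset.mem_filter.mp hb).1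
    have hac := (Finset.mem_filter.mp ha).2
    have hbc := (Finset.mem_filter.mp hb).2
    have hpA : p ∉ A := by rcases hp with rfl | rfl <;> assumption
    have hs : ({p, a, b} : Finset V) ∈ equalityGadget u v A := by
      simp only [equalityGadget, Finset.mem_filter, Finset.mem_powersetCard]
      constructor
      · constructor
        · intro w hw
          simp only [Finset.mem_insert, Finset.mem_singleton] at hw
          rcases hw with rfl | rfl | rfl
          · rcases hp with rfl | rfl
            · exact Finset.mem_insert_self _ _
            · exact Finset.mem_insert_of_mem (Finset.mem_insert_self _ _)
          · exact Finset.mem_insert_of_mem (Finset.mem_insert_of_mem haA)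
          · exact Finset.mem_insert_of_mem (Finset.mem_insert_of_mem hbA)
        · rw [Finset.card_insert_of_notMem, Finset.card_insert_of_notMem,
            Finset.card_singleton]
          · simp [hab]
          · simp only [Finset.mem_insert, Finset.mem_singleton]
            push_neg
            exact ⟨fun h => hpA (h ▸ haA), fun h => hpA (h ▸ hbA)⟩
      · rintro ⟨hu', hv'⟩
        simp only [Finset.mem_insert, Finset.mem_singleton] at hu' hv'
        rcases hp with rfl | rfl
        · rcases hv' with rfl | rfl | rfl
          · exact huv rfl
          · exact hvA haA
          · exact hvA hbA
        · rcases hu' with rfl | rfl | rfl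
          · exact huv rfl
          · exact huA haA
          · exact huA hbA
    obtain ⟨x, hx, y, hy, hxy⟩ := hc _ hs
    have hcol : ∀ z ∈ ({p, a, b} : Finset V), c z = c p := by
      intro z hz
      simp only [Finset.mem_insert, Finset.mem_singleton] at hz
      rcases hz with rfl | rfl | rfl
      · rfl
      · exact hac
      · exact hbc
    exact hxy ((hcol x hx).trans (hcol y hy).symm)
  have hu1 := key u (Or.inl rfl)
  have hv1 := key v (Or.inr rfl)
  have hsum : A.card = ∑ k : Fin 3, (A.filter (fun w => c w = k)).card :=
    Finset.card_eq_sum_card_fiberwise (fun x _ => Finset.mem_univ (c x))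
  rw [hA, Fin.sum_univ_three] at hsum
  rcases fin3_cases (c u) with h0 | h0 | h0 <;> rcases fin3_cases (c v) with h1 | h1 | h1 <;>
    rw [h0] at hu1 <;> rw [h1] at hv1 <;>
    first
      | exact hne (h0.trans h1.symm)
      | (have t0 := h2 0; have t1 := h2 1; have t2 := h2 2; omega)

lemma eqGadget_proper {V : Type*} [DecidableEq V] {u v : V} {A : Finset V} {c : V → Fin 3}
    (hcu : c u = c v)
    (h1 : (A.filter (fun w => c w = c u)).card ≤ 1)
    (h2 : ∀ k, (A.filter (fun w => c w = k)).card ≤ 2) :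
    IsProperColoring3 (equalityGadget u v A) c := by
  intro e he
  simp only [equalityGadget, Finset.mem_filter, Finset.mem_powersetCard] at he
  obtain ⟨⟨hsub, hcard⟩, hnot⟩ := he
  by_contra h
  push_neg at h
  obtain ⟨a0, ha0⟩ := Finset.card_pos.mp (by omega : 0 < e.card)
  set k := c a0 with hk
  have hmono : ∀ z ∈ e, c z = k := fun z hz => h z hz a0 ha0
  by_cases hkx : k = c u
  · -- e \ {u,v} ⊆ A.filter (c = c u), has card ≥ 2 > 1
    have hsub2 : (e.erase u).erase v ⊆ A.filter (fun w => c w = c u) := by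
      intro w hw
      have hwv := Finset.ne_of_mem_erase hw
      have hw' := Finset.mem_of_mem_erase hw
      have hwu := Finset.ne_of_mem_erase hw'
      have hwe := Finset.mem_of_mem_erase hw'
      have := hsub hwe
      simp only [Finset.mem_insert] at this
      rcases this with rfl | rfl | hwA
      · exact absurd rfl hwu
      · exact absurd rfl hwv
      · exact Finset.mem_filter.mpr ⟨hwA, (hmono w hwe).trans hkx⟩
    have hge : 2 ≤ ((e.erase u).erase v).card := by
      by_cases hue : u ∈ e
      · have hve : v ∉ e := fun hve => hnot ⟨hue, hve⟩
        rw [Finset.erase_eq_of_notMem (fun hv' => hve (Finset.mem_of_mem_erase hv'))]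
        have := Finset.card_erase_of_mem hue
        omega
      · rw [Finset.erase_eq_of_notMem hue]
        have := Finset.card_erase_le (a := v) (s := e)
        have := Finset.pred_card_le_card_erase (a := v) (s := e)
        omega
    have := Finset.card_le_card hsub2
    omega
  · -- all of e is inside A, fiber of k has card ≤ 2
    have hsub2 : e ⊆ A.filter (fun w => c w = k) := by
      intro w hw
      have := hsub hw
      simp only [Finset.mem_insert] at this
      rcases this with rfl | rfl | hwA
      · exact absurd (hmono w hw).symm hkx
      · exact absurd (hcu.trans (hmono w hw)).symm hkx
      · exact Finset.mem_filter.mpr ⟨hwA, hmono w hw⟩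
    have := Finset.card_le_card hsub2
    have := h2 k
    omega

def pat (x : Fin 3) : Fin 5 → Fin 3 := ![x, x + 1, x + 1, x + 2, x + 2]

lemma pat_card1 : ∀ x : Fin 3,
    (Finset.univ.filter (fun i : Fin 5 => pat x i = x)).card ≤ 1 := by decide

lemma pat_card2 : ∀ x k : Fin 3,
    (Finset.univ.filter (fun i : Fin 5 => pat x i = k)).card ≤ 2 := by decide

lemma fiber_le {V : Type*} [DecidableEq V] {A : Finset V} (e : A ≃ Fin 5)
    (g : Fin 5 → Fin 3) (c : V → Fin 3)
    (hc : ∀ w (h : w ∈ A), c w = g (e ⟨w, h⟩)) (k : Fin 3) :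
    (A.filter (fun w => c w = k)).card ≤ (Finset.univ.filter (fun i => g i = k)).card := by
  classical
  apply Finset.card_le_card_of_injOn (fun w => if h : w ∈ A then e ⟨w, h⟩ else 0)
  · intro w hw
    obtain ⟨hwA, hwk⟩ := Finset.mem_filter.mp hw
    simp only [hwA, dif_pos]
    exact Finset.mem_filter.mpr ⟨Finset.mem_univ _, by rw [← hc w hwA]; exact hwk⟩
  · intro w1 hw1 w2 hw2 heq
    simp only [Finset.coe_filter, Set.mem_setOf_eq] at hw1 hw2
    simp only [hw1.1, hw2.1, dif_pos] at heq
    have := e.injective heq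
    exact Subtype.mk_eq_mk.mp this

theorem inequalityGadget_spec {V : Type*} [DecidableEq V] (u v u' v' : V)
    (A₁ A₂ : Finset V)
    (huv : u ≠ v) (huu' : u ≠ u') (huv' : u ≠ v') (hvu' : v ≠ u') (hvv' : v ≠ v')
    (hu'v' : u' ≠ v')
    (hA₁ : A₁.card = 5) (hA₂ : A₂.card = 5) (hA₁₂ : Disjoint A₁ A₂)
    (hA₁d : Disjoint A₁ ({u, v, u', v'} : Finset V))
    (hA₂d : Disjoint A₂ ({u, v, u', v'} : Finset V)) :
    (∀ c : V → Fin 3, IsProperColoring3 (inequalityGadget u v u' v' A₁ A₂) c → c u ≠ c v) ∧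
    (∀ x y : Fin 3, x ≠ y → ∃ c : V → Fin 3,
      IsProperColoring3 (inequalityGadget u v u' v' A₁ A₂) c ∧ c u = x ∧ c v = y) := by
  have hmemA₁ : ∀ p ∈ ({u, v, u', v'} : Finset V), p ∉ A₁ := by
    intro p hp hpA
    exact (Finset.disjoint_left.mp hA₁d) hpA hp
  have hmemA₂ : ∀ p ∈ ({u, v, u', v'} : Finset V), p ∉ A₂ := by
    intro p hp hpA
    exact (Finset.disjoint_left.mp hA₂d) hpA hp
  have huA₁ : u ∉ A₁ := hmemA₁ u (by simp)
  have hvA₁ : v ∉ A₁ := hmemA₁ v (by simp)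
  have hu'A₁ : u' ∉ A₁ := hmemA₁ u' (by simp)
  have hv'A₁ : v' ∉ A₁ := hmemA₁ v' (by simp)
  have huA₂ : u ∉ A₂ := hmemA₂ u (by simp)
  have hvA₂ : v ∉ A₂ := hmemA₂ v (by simp)
  have hu'A₂ : u' ∉ A₂ := hmemA₂ u' (by simp)
  have hv'A₂ : v' ∉ A₂ := hmemA₂ v' (by simp)
  have hedge1 : ({u, u', v} : Finset V) ∈ inequalityGadget u v u' v' A₁ A₂ := by
    simp [inequalityGadget]
  have hedge2 : ({u, v, v'} : Finset V) ∈ inequalityGadget u v u' v' A₁ A₂ := by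
    simp [inequalityGadget]
  constructor
  · intro c hc hcv
    have hc1 : IsProperColoring3 (equalityGadget u u' A₁) c := by
      intro e he
      exact hc e (by simp [inequalityGadget]; tauto)
    have huu : c u = c u' := eqGadget_forces huu' huA₁ hu'A₁ hA₁ hc1
    obtain ⟨x, hx, y, hy, hxy⟩ := hc _ hedge1
    have hcol : ∀ z ∈ ({u, u', v} : Finset V), c z = c u := by
      intro z hz
      simp only [Finset.mem_insert, Finset.mem_singleton] at hz
      rcases hz with rfl | rfl | rfl
      · rfl
      · exact huu.symm
      · exact hcv.symm
    exact hxy ((hcol x hx).trans (hcol y hy).symm)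
  · intro x y hxy
    classical
    let e₁ : A₁ ≃ Fin 5 := Finset.equivFinOfCardEq hA₁
    let e₂ : A₂ ≃ Fin 5 := Finset.equivFinOfCardEq hA₂
    set c : V → Fin 3 := fun w =>
      if w = u ∨ w = u' then x
      else if w = v ∨ w = v' then y
      else if h : w ∈ A₁ then pat x (e₁ ⟨w, h⟩)
      else if h : w ∈ A₂ then pat y (e₂ ⟨w, h⟩)
      else 0 with hcdef
    have hcu : c u = x := by simp [hcdef]
    have hcu' : c u' = x := by simp [hcdef]
    have hcv : c v = y := by simp [hcdef, huv.symm, hvu']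
    have hcv' : c v' = y := by simp [hcdef, huv'.symm, hu'v'.symm]
    have hcA₁ : ∀ w (h : w ∈ A₁), c w = pat x (e₁ ⟨w, h⟩) := by
      intro w h
      have h1 : w ≠ u := fun e => huA₁ (e ▸ h)
      have h2 : w ≠ u' := fun e => hu'A₁ (e ▸ h)
      have h3 : w ≠ v := fun e => hvA₁ (e ▸ h)
      have h4 : w ≠ v' := fun e => hv'A₁ (e ▸ h)
      simp [hcdef, h1, h2, h3, h4, h]
    have hcA₂ : ∀ w (h : w ∈ A₂), c w = pat y (e₂ ⟨w, h⟩) := by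
      intro w h
      have h1 : w ≠ u := fun e => huA₂ (e ▸ h)
      have h2 : w ≠ u' := fun e => hu'A₂ (e ▸ h)
      have h3 : w ≠ v := fun e => hvA₂ (e ▸ h)
      have h4 : w ≠ v' := fun e => hv'A₂ (e ▸ h)
      have h5 : w ∉ A₁ := fun hw => (Finset.disjoint_left.mp hA₁₂) hw h
      simp [hcdef, h1, h2, h3, h4, h5, h]
    refine ⟨c, ?_, hcu, hcv⟩
    intro e he
    simp only [inequalityGadget, Finset.mem_union, Finset.mem_insert,
      Finset.mem_singleton] at he
    rcases he with (he | he) | he | he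
    · refine eqGadget_proper (hcu.trans hcu'.symm) ?_ ?_ e he
      · rw [hcu]
        calc (A₁.filter (fun w => c w = x)).card
            ≤ (Finset.univ.filter (fun i : Fin 5 => pat x i = x)).card :=
              fiber_le e₁ (pat x) c hcA₁ x
          _ ≤ 1 := pat_card1 x
      · intro k
        calc (A₁.filter (fun w => c w = k)).card
            ≤ (Finset.univ.filter (fun i : Fin 5 => pat x i = k)).card :=
              fiber_le e₁ (pat x) c hcA₁ k
          _ ≤ 2 := pat_card2 x k
    · refine eqGadget_proper (hcv.trans hcv'.symm) ?_ ?_ e he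
      · rw [hcv]
        calc (A₂.filter (fun w => c w = y)).card
            ≤ (Finset.univ.filter (fun i : Fin 5 => pat y i = y)).card :=
              fiber_le e₂ (pat y) c hcA₂ y
          _ ≤ 1 := pat_card1 y
      · intro k
        calc (A₂.filter (fun w => c w = k)).card
            ≤ (Finset.univ.filter (fun i : Fin 5 => pat y i = k)).card :=
              fiber_le e₂ (pat y) c hcA₂ k
          _ ≤ 2 := pat_card2 y k
    · subst he
      exact ⟨u, by simp, v, by simp, by rw [hcu, hcv]; exact hxy⟩
    · subst he
      exact ⟨u, by simp, v, by simp, by rw [hcu, hcv]; exact hxy⟩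
end

section
/- Let G be a finite simple graph, let H = ρ(G) be the 3-uniform hypergraph obtained from G by extending each edge with a fresh vertex, and let m ∈ ℕ. If there exists a 3-partite 3-uniform hypergraph H' on the vertex set of H with |E(H) \ E(H')| ≤ m, then there exists a spanning subgraph G' of G with |E(G)| − |E(G')| ≤ m such that G' admits a proper 3-coloring (adjacent vertices receive distinct colors). -/
/-- The 3-uniform hypergraph `ρ(G)` obtained from a graph `G` by extending each
edge with a fresh vertex: vertices are `V(G)` (as `Sum.inl`) together with one
fresh vertex `Sum.inr e` for each edge `e` of `G`; the hyperedges are the sets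
`{u, v, a_e}` for each edge `e = {u, v}` of `G`. -/
def rho {V : Type*} [DecidableEq V] (G : SimpleGraph V) : Set (Finset (V ⊕ Sym2 V)) :=
  { h | ∃ u v, G.Adj u v ∧ h = {Sum.inl u, Sum.inl v, Sum.inr s(u, v)} }

/-- The vertex set of `ρ(G)`: the vertices of `G` together with the fresh
vertices `a_e` for the edges `e` of `G`. -/
def rhoVerts {V : Type*} (G : SimpleGraph V) : Set (V ⊕ Sym2 V) :=
  Set.range Sum.inl ∪ Sum.inr '' G.edgeSet

/-- `p` is a 3-partition of the 3-uniform hypergraph with hyperedge set `E`: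
the vertices of every hyperedge receive pairwise distinct colors. -/
def IsPartition3 {W : Type*} (E : Set (Finset W)) (p : W → Fin 3) : Prop :=
  ∀ e ∈ E, ∀ x ∈ e, ∀ y ∈ e, x ≠ y → p x ≠ p y

/-! Keep exactly the edges of `G` whose hyperedge `{u, v, a_e}` survives in `H'`. Restricting a
3-partition of `H'` to `V(G)` colours these edges properly, and `e ↦ {u, v, a_e}` injects the
deleted edges into `ρ(G) \ H'`. -/

theorem Set.ncard_sub_ncard_le_ncard_sdiff {α : Type*} {s t : Set α} (hst : s ⊆ t) :
    t.ncard - s.ncard ≤ (t \ s).ncard := by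
  rcases t.finite_or_infinite with ht | ht
  · exact (Set.ncard_sdiff' hst ht).ge
  · simp [ht.ncard]

section

variable {V : Type*} [DecidableEq V]

def rhoEdge : Sym2 V → Finset (V ⊕ Sym2 V) :=
  Sym2.lift ⟨fun u v => {Sum.inl u, Sum.inl v, Sum.inr s(u, v)}, fun u v => by
    dsimp only
    rw [Sym2.eq_swap, Finset.insert_comm]⟩

@[simp]
lemma rhoEdge_mk (u v : V) : rhoEdge s(u, v) = {Sum.inl u, Sum.inl v, Sum.inr s(u, v)} := rfl

lemma inr_mem_rhoEdge (e : Sym2 V) : Sum.inr e ∈ rhoEdge e := by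
  induction e using Sym2.inductionOn with
  | hf u v => simp

lemma rhoEdge_injective : Function.Injective (rhoEdge (V := V)) := by
  intro e e' h
  have he := inr_mem_rhoEdge e
  rw [h] at he
  induction e' using Sym2.inductionOn with
  | hf u v => simpa using he

lemma rho_eq_image_rhoEdge (G : SimpleGraph V) : rho G = rhoEdge '' G.edgeSet := by
  ext h
  constructor
  · rintro ⟨u, v, huv, rfl⟩
    exact ⟨s(u, v), huv, rfl⟩
  · rintro ⟨e, he, rfl⟩
    induction e using Sym2.inductionOn with
    | hf u v => exact ⟨u, v, he, rfl⟩

def rhoTrace (G : SimpleGraph V) (H' : Set (Finset (V ⊕ Sym2 V))) : SimpleGraph V :=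
  G.deleteEdges (rhoEdge ⁻¹' H'ᶜ)

lemma rhoTrace_le (G : SimpleGraph V) (H' : Set (Finset (V ⊕ Sym2 V))) : rhoTrace G H' ≤ G :=
  G.deleteEdges_le _

lemma rho_sdiff_eq_image_edgeSet_sdiff_rhoTrace (G : SimpleGraph V)
    (H' : Set (Finset (V ⊕ Sym2 V))) :
    rho G \ H' = rhoEdge '' (G.edgeSet \ (rhoTrace G H').edgeSet) := by
  rw [rhoTrace, SimpleGraph.edgeSet_deleteEdges, Set.sdiff_sdiff_right_self,
    Set.image_inter_preimage, rho_eq_image_rhoEdge, Set.sdiff_eq]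

lemma ncard_edgeSet_sdiff_rhoTrace (G : SimpleGraph V) (H' : Set (Finset (V ⊕ Sym2 V))) :
    (G.edgeSet \ (rhoTrace G H').edgeSet).ncard = (rho G \ H').ncard := by
  rw [rho_sdiff_eq_image_edgeSet_sdiff_rhoTrace, Set.ncard_image_of_injective _ rhoEdge_injective]

lemma IsPartition3.ne_of_rhoTrace_adj {G : SimpleGraph V} {H' : Set (Finset (V ⊕ Sym2 V))}
    {p : V ⊕ Sym2 V → Fin 3} (hp : IsPartition3 H' p) {u v : V}
    (huv : (rhoTrace G H').Adj u v) :
    p (Sum.inl u) ≠ p (Sum.inl v) := by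
  rw [rhoTrace, SimpleGraph.deleteEdges_adj] at huv
  exact hp _ (not_not.mp huv.2) _ (by simp) _ (by simp) (by simpa using huv.1.ne)

end

theorem colorable_subgraph_of_close_to_partite_general {V : Type*} [DecidableEq V]
    (G : SimpleGraph V) (m : ℕ) (H' : Set (Finset (V ⊕ Sym2 V)))
    (hpart : ∃ p : V ⊕ Sym2 V → Fin 3, IsPartition3 H' p)
    (hclose : (rho G \ H').ncard ≤ m) :
    ∃ G' : SimpleGraph V, G' ≤ G ∧ G.edgeSet.ncard - G'.edgeSet.ncard ≤ m ∧
      ∃ c : V → Fin 3, ∀ u v, G'.Adj u v → c u ≠ c v := by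
  obtain ⟨p, hp⟩ := hpart
  refine ⟨rhoTrace G H', rhoTrace_le G H', ?_, fun v => p (Sum.inl v),
    fun _ _ => hp.ne_of_rhoTrace_adj⟩
  calc G.edgeSet.ncard - (rhoTrace G H').edgeSet.ncard
      ≤ (G.edgeSet \ (rhoTrace G H').edgeSet).ncard :=
        Set.ncard_sub_ncard_le_ncard_sdiff (SimpleGraph.edgeSet_mono (rhoTrace_le G H'))
    _ = (rho G \ H').ncard := ncard_edgeSet_sdiff_rhoTrace G H'
    _ ≤ m := hclose

theorem colorable_subgraph_of_close_to_partite {V : Type*} [Fintype V] [DecidableEq V]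
    (G : SimpleGraph V) (m : ℕ) (H' : Set (Finset (V ⊕ Sym2 V)))
    (hvert : ∀ e ∈ H', ∀ x ∈ e, x ∈ rhoVerts G)
    (huni : ∀ e ∈ H', e.card = 3)
    (hpart : ∃ p : V ⊕ Sym2 V → Fin 3, IsPartition3 H' p)
    (hclose : (rho G \ H').ncard ≤ m) :
    ∃ G' : SimpleGraph V, G' ≤ G ∧ G.edgeSet.ncard - G'.edgeSet.ncard ≤ m ∧
      ∃ c : V → Fin 3, ∀ u v, G'.Adj u v → c u ≠ c v :=
  colorable_subgraph_of_close_to_partite_general G m H' hpart hclose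
end

section
/- Let k ≥ 3, let G be a finite simple graph, and let ρ_k(G) be the k-uniform hypergraph whose vertex set is V(G) together with, for each edge e of G, a fresh (k−2)-element set A_e (the sets A_e pairwise disjoint and disjoint from V(G)), and whose hyperedges are the sets {u,v} ∪ A_e for each edge e = {u,v} of G. Then G admits a proper k-coloring (adjacent vertices receive distinct colors) if and only if ρ_k(G) is k-partite. -/
/-- The `k`-uniform hypergraph `ρ_k(G)` obtained from a graph `G`: vertices are
`V(G)` (as `Sum.inl`) together with, for each edge `e` of `G`, the fresh
`(k-2)`-element set `A_e = {Sum.inr (e, i) : i}`; the hyperedges are the sets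
`{u, v} ∪ A_e` for each edge `e = {u, v}` of `G`. -/
def rhoK {V : Type*} [DecidableEq V] (k : ℕ) (G : SimpleGraph V) :
    Set (Finset (V ⊕ Sym2 V × Fin (k - 2))) :=
  { h | ∃ u v, G.Adj u v ∧
      h = {Sum.inl u, Sum.inl v} ∪
        (Finset.univ.image fun i : Fin (k - 2) => Sum.inr (s(u, v), i)) }

/-- `p` is a `k`-partition of the `k`-uniform hypergraph with hyperedge set `E`:
the vertices of every hyperedge receive pairwise distinct colors. -/
def IsPartitionK {W : Type*} (k : ℕ) (E : Set (Finset W)) (p : W → Fin k) : Prop :=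
  ∀ e ∈ E, ∀ x ∈ e, ∀ y ∈ e, x ≠ y → p x ≠ p y

theorem colorable_iff_rhoK_partite {V : Type*} [Fintype V] [DecidableEq V]
    (k : ℕ) (hk : 3 ≤ k) (G : SimpleGraph V) :
    (∃ c : V → Fin k, ∀ u v, G.Adj u v → c u ≠ c v) ↔
    (∃ p : V ⊕ Sym2 V × Fin (k - 2) → Fin k, IsPartitionK k (rhoK k G) p) := by
  classical
  constructor
  · rintro ⟨c, hc⟩
    have hk0 : 0 < k := by omega
    let d : Fin k := ⟨0, hk0⟩
    let S : Sym2 V → Finset (Fin k) :=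
      Sym2.lift ⟨fun u v => ({c u, c v} : Finset (Fin k))ᶜ, fun u v => by
        simp only []
        rw [Finset.pair_comm]⟩
    let p : V ⊕ Sym2 V × Fin (k - 2) → Fin k := fun x =>
      match x with
      | .inl v => c v
      | .inr (e, i) => ((S e).sort (· ≤ ·)).getD i d
    refine ⟨p, ?_⟩
    rintro h ⟨u, v, huv, rfl⟩ x hx y hy hxy
    have hcuv : c u ≠ c v := hc u v huv
    have hS : S s(u, v) = ({c u, c v} : Finset (Fin k))ᶜ := rfl
    have hcard : (S s(u, v)).card = k - 2 := by
      rw [hS, Finset.card_compl, Finset.card_pair hcuv, Fintype.card_fin]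
    have hlen : ((S s(u, v)).sort (· ≤ ·)).length = k - 2 := by
      rw [Finset.length_sort, hcard]
    have hmemS : ∀ i : Fin (k - 2),
        ((S s(u, v)).sort (· ≤ ·)).getD i d ∈ S s(u, v) := by
      intro i
      have hi : (i : ℕ) < ((S s(u, v)).sort (· ≤ ·)).length := by
        rw [hlen]; exact i.2
      rw [List.getD_eq_getElem _ _ hi]
      exact (Finset.mem_sort _).mp (List.getElem_mem hi)
    have hnotuv : ∀ i : Fin (k - 2),
        ((S s(u, v)).sort (· ≤ ·)).getD i d ≠ c u ∧
        ((S s(u, v)).sort (· ≤ ·)).getD i d ≠ c v := by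
      intro i
      have := hmemS i
      rw [hS, Finset.mem_compl, Finset.mem_insert, Finset.mem_singleton] at this
      push_neg at this
      exact this
    simp only [Finset.mem_union, Finset.mem_insert, Finset.mem_singleton,
      Finset.mem_image, Finset.mem_univ, true_and] at hx hy
    rcases hx with (rfl | rfl) | ⟨i, rfl⟩ <;>
      rcases hy with (rfl | rfl) | ⟨j, rfl⟩
    · exact absurd rfl hxy
    · exact hcuv
    · exact fun hp => (hnotuv j).1 hp.symm
    · exact hcuv.symm
    · exact absurd rfl hxy
    · exact fun hp => (hnotuv j).2 hp.symm
    · exact (hnotuv i).1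
    · exact (hnotuv i).2
    · -- i ≠ j
      have hij : i ≠ j := by
        intro h; apply hxy; rw [h]
      intro hp
      apply hij
      have hi : (i : ℕ) < ((S s(u, v)).sort (· ≤ ·)).length := by
        rw [hlen]; exact i.2
      have hj : (j : ℕ) < ((S s(u, v)).sort (· ≤ ·)).length := by
        rw [hlen]; exact j.2
      have hnd : ((S s(u, v)).sort (· ≤ ·)).Nodup := Finset.sort_nodup _ _
      simp only [p, List.getD_eq_getElem _ _ hi, List.getD_eq_getElem _ _ hj] at hp
      have : (i : ℕ) = (j : ℕ) := hnd.getElem_inj_iff.mp hp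
      exact Fin.ext this
  · rintro ⟨p, hp⟩
    refine ⟨fun v => p (Sum.inl v), fun u v huv => ?_⟩
    have hmem : ({Sum.inl u, Sum.inl v} ∪
        (Finset.univ.image fun i : Fin (k - 2) => Sum.inr (s(u, v), i)) :
        Finset (V ⊕ Sym2 V × Fin (k - 2))) ∈ rhoK k G := ⟨u, v, huv, rfl⟩
    exact hp _ hmem (Sum.inl u)
      (Finset.mem_union_left _ (Finset.mem_insert_self _ _))
      (Sum.inl v)
      (Finset.mem_union_left _ (Finset.mem_insert_of_mem (Finset.mem_singleton_self _)))
      (by simp [huv.ne])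
end

section
/- Let G be a finite simple graph on t vertices such that for every vertex set S with |S| ≤ t/2 one has |N(S)| ≥ |S|, where N(S) denotes the set of vertices outside S adjacent to some vertex of S. Let 0 ≤ γ < 1/2 and let G' be a spanning subgraph of G obtained by deleting at most γ·t edges. Then G' has a connected component containing at least (1 − γ)·t vertices. -/
/-!
Let `D = G \ G'` be the graph of deleted edges. If `A` is a union of components of `G'`, every
vertex of `N(A)` is the head of a dart of `D` leaving `A`. If some component `C` has more than
`t/2` vertices, expansion of its complement gives `t - |C| ≤ |N(Cᶜ)| ≤ |E(D)| ≤ γt`. Otherwise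
expansion of every component gives `t ≤ ∑_C |N(C)| ≤ #darts(D) = 2|E(D)| ≤ 2γt < t`.
-/

open Finset SimpleGraph

namespace SimpleGraph

variable {V : Type*} [Fintype V]

lemma sum_card_darts_leaving_fibers_le {ι : Type*} [Fintype ι] [DecidableEq ι]
    (H : SimpleGraph V) [DecidableRel H.Adj] [Fintype H.edgeSet] (f : V → ι) :
    ∑ i, #{d : H.Dart | f d.fst = i ∧ f d.snd ≠ i} ≤ 2 * #H.edgeFinset :=
  calc ∑ i, #{d : H.Dart | f d.fst = i ∧ f d.snd ≠ i}
      ≤ ∑ i, #{d : H.Dart | f d.fst = i} :=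
        sum_le_sum fun i _ => card_le_card fun d => by simp +contextual
    _ = Fintype.card H.Dart := (card_eq_sum_card_fiberwise fun _ _ => mem_univ _).symm
    _ = 2 * #H.edgeFinset := by convert H.dart_card_eq_twice_card_edges

variable [DecidableEq V]

def vertexBoundary (G : SimpleGraph V) [DecidableRel G.Adj] (S : Finset V) : Finset V :=
  {v | v ∉ S ∧ ∃ u ∈ S, G.Adj u v}

def IsVertexExpander (G : SimpleGraph V) [DecidableRel G.Adj] : Prop :=
  ∀ S : Finset V, 2 * #S ≤ Fintype.card V → #S ≤ #(G.vertexBoundary S)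

lemma card_darts_leaving_le_card_edgeFinset (H : SimpleGraph V) [DecidableRel H.Adj]
    [Fintype H.edgeSet] (A : Finset V) :
    #{d : H.Dart | d.fst ∈ A ∧ d.snd ∉ A} ≤ #H.edgeFinset := by
  refine card_le_card_of_injOn Dart.edge (fun d _ => by simp) fun d hd d' hd' h => ?_
  rcases (dart_edge_eq_iff d d').1 h with h | rfl
  · exact h
  · simp only [coe_filter, mem_univ, true_and, Set.mem_ofPred_eq, Dart.symm_toProd,
      Prod.fst_swap, Prod.snd_swap] at hd hd'
    exact absurd hd'.1 hd.2

variable {G G' : SimpleGraph V} [DecidableRel G.Adj] [DecidableRel G'.Adj]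

lemma card_vertexBoundary_le_card_sdiff_darts_leaving {A : Finset V}
    (hA : ∀ ⦃u v⦄, G'.Adj u v → u ∈ A → v ∈ A) :
    #(G.vertexBoundary A) ≤ #{d : (G \ G').Dart | d.fst ∈ A ∧ d.snd ∉ A} := by
  refine card_le_card_of_surjOn (fun d : (G \ G').Dart => d.snd) fun v hv => ?_
  obtain ⟨hvA, u, huA, huv⟩ := (mem_filter.1 hv).2
  have hdel : (G \ G').Adj u v := (sdiff_adj ..).2 ⟨huv, fun h => hvA (hA h huA)⟩
  exact ⟨⟨(u, v), hdel⟩, by simpa using ⟨huA, hvA⟩, rfl⟩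

lemma card_compl_le_card_sdiff_edgeFinset (hG : G.IsVertexExpander) {A : Finset V}
    (hA : ∀ ⦃u v⦄, G'.Adj u v → (u ∈ A ↔ v ∈ A)) (hbig : Fintype.card V < 2 * #A) :
    #Aᶜ ≤ #(G \ G').edgeFinset :=
  calc #Aᶜ ≤ #(G.vertexBoundary Aᶜ) := hG _ (by rw [card_compl]; omega)
    _ ≤ #{d : (G \ G').Dart | d.fst ∈ Aᶜ ∧ d.snd ∉ Aᶜ} :=
      card_vertexBoundary_le_card_sdiff_darts_leaving fun u v h hu =>
        mem_compl.2 fun hv => mem_compl.1 hu ((hA h).2 hv)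
    _ ≤ #(G \ G').edgeFinset := card_darts_leaving_le_card_edgeFinset _ _

lemma card_le_two_mul_card_sdiff_edgeFinset (hG : G.IsVertexExpander)
    (hsmall : ∀ c : G'.ConnectedComponent, 2 * #c.supp.toFinset ≤ Fintype.card V) :
    Fintype.card V ≤ 2 * #(G \ G').edgeFinset := by
  calc Fintype.card V = ∑ c : G'.ConnectedComponent, #c.supp.toFinset := by
        classical
        rw [← card_univ, card_eq_sum_card_fiberwise fun v _ => mem_univ (G'.connectedComponentMk v)]
        congr! 2 with c
        ext v
        simp
    _ ≤ ∑ c : G'.ConnectedComponent, #(G.vertexBoundary c.supp.toFinset) :=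
        sum_le_sum fun c _ => hG _ (hsmall c)
    _ ≤ ∑ c : G'.ConnectedComponent,
          #{d : (G \ G').Dart | d.fst ∈ c.supp.toFinset ∧ d.snd ∉ c.supp.toFinset} :=
        sum_le_sum fun c _ => card_vertexBoundary_le_card_sdiff_darts_leaving fun u v h hu =>
          Set.mem_toFinset.2 <| (c.mem_supp_congr_adj h).1 (Set.mem_toFinset.1 hu)
    _ ≤ 2 * #(G \ G').edgeFinset := by
        classical
        simpa using sum_card_darts_leaving_fibers_le (G \ G') G'.connectedComponentMk

end SimpleGraph

theorem large_component_of_expander_after_deletion_general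
    {V : Type*} [Fintype V] [Nonempty V] [DecidableEq V]
    (G : SimpleGraph V) [DecidableRel G.Adj]
    (hexp : ∀ S : Finset V, 2 * S.card ≤ Fintype.card V →
      S.card ≤ (Finset.univ.filter fun v => v ∉ S ∧ ∃ u ∈ S, G.Adj u v).card)
    (γ : ℝ) (hγ : γ < 1 / 2)
    (G' : SimpleGraph V)
    (hdel : ((G.edgeSet \ G'.edgeSet).ncard : ℝ) ≤ γ * Fintype.card V) :
    ∃ c : G'.ConnectedComponent, (1 - γ) * Fintype.card V ≤ (c.supp.ncard : ℝ) := by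
  classical
  have hG : G.IsVertexExpander := hexp
  have hD : (#(G \ G').edgeFinset : ℝ) ≤ γ * Fintype.card V := by
    rwa [← Set.ncard_coe_finset, coe_edgeFinset, edgeSet_sdiff]
  by_cases hbig : ∃ c : G'.ConnectedComponent, Fintype.card V < 2 * #c.supp.toFinset
  · obtain ⟨c, hc⟩ := hbig
    have hrest := card_compl_le_card_sdiff_edgeFinset hG (fun u v h => by
      simpa using c.mem_supp_congr_adj h) hc
    have hsplit : (#c.supp.toFinset : ℝ) + #c.supp.toFinsetᶜ = Fintype.card V := by
      exact_mod_cast card_add_card_compl _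
    refine ⟨c, ?_⟩
    rw [Set.ncard_eq_toFinset_card']
    linarith [(Nat.cast_le (α := ℝ)).2 hrest]
  · simp only [not_exists, not_lt] at hbig
    have ht : (Fintype.card V : ℝ) ≤ 2 * #(G \ G').edgeFinset := by
      exact_mod_cast card_le_two_mul_card_sdiff_edgeFinset hG hbig
    have ht0 : (0 : ℝ) < Fintype.card V := by exact_mod_cast Fintype.card_pos
    linarith [mul_lt_mul_of_pos_right hγ ht0]

/-- If `G` is a graph on `t` vertices in which every vertex set `S` with
`|S| ≤ t/2` satisfies `|N(S)| ≥ |S|`, and `G'` is a spanning subgraph of `G`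
obtained by deleting at most `γ·t` edges, where `0 ≤ γ < 1/2`, then `G'` has a
connected component containing at least `(1 - γ)·t` vertices. -/
theorem large_component_of_expander_after_deletion
    {V : Type*} [Fintype V] [Nonempty V] [DecidableEq V]
    (G : SimpleGraph V) [DecidableRel G.Adj]
    (hexp : ∀ S : Finset V, 2 * S.card ≤ Fintype.card V →
      S.card ≤ (Finset.univ.filter fun v => v ∉ S ∧ ∃ u ∈ S, G.Adj u v).card)
    (γ : ℝ) (hγ0 : 0 ≤ γ) (hγ : γ < 1 / 2)
    (G' : SimpleGraph V) (hsub : G' ≤ G)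
    (hdel : ((G.edgeSet \ G'.edgeSet).ncard : ℝ) ≤ γ * Fintype.card V) :
    ∃ c : G'.ConnectedComponent, (1 - γ) * Fintype.card V ≤ (c.supp.ncard : ℝ) :=
  large_component_of_expander_after_deletion_general G hexp γ hγ G' hdel
end
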